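/- arXiv:0801.3401 — 2 statements merged into one kernel-verified Lean document; each statement's English description precedes it below -/
import Mathlib

section
/- If f : [0,∞) → (0,∞) is a decreasing function with lim_{t→∞} f(t) = 0 and Φ satisfies ‖Φ(t+t₀,t₀,x)v‖ ≥ f(t)‖v‖ for all t,t₀ ≥ 0 and all (x,v), then there exist constants Ñ > 1 and ω > 0 such that Ñ‖Φ(t+t₀,t₀,x)v‖ ≥ e^{-ωt}‖v‖ for all t,t₀ ≥ 0 and all (x,v). -/
open MeasureTheory Real Filter intervalIntegral

/-!
Monotonicity of `f` gives the uniform bound `‖Φ(s + t₀, t₀, x) v‖ ≥ c ‖v‖` for `s ∈ [0, 1]`, with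
`c = min (f 1) (1/2)`. Splitting a time `t ∈ [n, n + 1]` into `n` unit steps plus a rest via the
cocycle identity multiplies these bounds, so `‖Φ(t + t₀, t₀, x) v‖ ≥ c ^ (n + 1) ‖v‖ ≥ c · c ^ t ‖v‖`,
an exponential bound with `N = c⁻¹` and `ω = -log c`.
-/

def IsCocycleOver {X V : Type*} [NormedAddCommGroup V] [NormedSpace ℝ V]
    (φ : ℝ → ℝ → X → X) (Φ : ℝ → ℝ → X → V →L[ℝ] V) : Prop :=
  ∀ t s t₀ x, 0 ≤ t₀ → t₀ ≤ s → s ≤ t → Φ t t₀ x = (Φ t s (φ s t₀ x)).comp (Φ s t₀ x)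

namespace IsCocycleOver

variable {X V : Type*} [NormedAddCommGroup V] [NormedSpace ℝ V]
  {φ : ℝ → ℝ → X → X} {Φ : ℝ → ℝ → X → V →L[ℝ] V} {c : ℝ}

theorem pow_succ_mul_norm_le (hΦ : IsCocycleOver φ Φ) (hc : 0 ≤ c)
    (hunit : ∀ s, 0 ≤ s → s ≤ 1 → ∀ t₀, 0 ≤ t₀ → ∀ x (v : V), c * ‖v‖ ≤ ‖Φ (s + t₀) t₀ x v‖)
    (n : ℕ) : ∀ t : ℝ, n ≤ t → t ≤ n + 1 → ∀ t₀, 0 ≤ t₀ → ∀ x (v : V),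
      c ^ (n + 1) * ‖v‖ ≤ ‖Φ (t + t₀) t₀ x v‖ := by
  induction n with
  | zero =>
    intro t ht0 ht1 t₀ ht₀ x v
    simp only [Nat.cast_zero, zero_add, pow_one] at ht0 ht1 ⊢
    exact hunit t ht0 ht1 t₀ ht₀ x v
  | succ n ih =>
    intro t htn htn' t₀ ht₀ x v
    push_cast at htn htn'
    have hn : (0 : ℝ) ≤ n := n.cast_nonneg
    set s := t - 1 + t₀
    have hsplit : Φ (t + t₀) t₀ x v = Φ (1 + s) s (φ s t₀ x) (Φ s t₀ x v) := by
      rw [show 1 + s = t + t₀ by ring, hΦ (t + t₀) s t₀ x ht₀ (by linarith) (by linarith)]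
      rfl
    have hrest : c ^ (n + 1) * ‖v‖ ≤ ‖Φ s t₀ x v‖ :=
      ih (t - 1) (by linarith) (by linarith) t₀ ht₀ x v
    calc c ^ (n + 1 + 1) * ‖v‖ = c * (c ^ (n + 1) * ‖v‖) := by ring
      _ ≤ c * ‖Φ s t₀ x v‖ := mul_le_mul_of_nonneg_left hrest hc
      _ ≤ ‖Φ (t + t₀) t₀ x v‖ :=
        hsplit ▸ hunit 1 zero_le_one le_rfl s (by linarith) (φ s t₀ x) (Φ s t₀ x v)

theorem exp_mul_norm_le (hΦ : IsCocycleOver φ Φ) (hc0 : 0 < c) (hc1 : c ≤ 1)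
    (hunit : ∀ s, 0 ≤ s → s ≤ 1 → ∀ t₀, 0 ≤ t₀ → ∀ x (v : V), c * ‖v‖ ≤ ‖Φ (s + t₀) t₀ x v‖)
    {t : ℝ} (ht : 0 ≤ t) {t₀ : ℝ} (ht₀ : 0 ≤ t₀) (x : X) (v : V) :
    exp (log c * t) * ‖v‖ ≤ c⁻¹ * ‖Φ (t + t₀) t₀ x v‖ := by
  set n := ⌊t⌋₊
  have hpow : c ^ (n + 1) * ‖v‖ ≤ ‖Φ (t + t₀) t₀ x v‖ :=
    hΦ.pow_succ_mul_norm_le hc0.le hunit n t (Nat.floor_le ht) (Nat.lt_floor_add_one t).le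
      t₀ ht₀ x v
  have hexp : exp (log c * t) ≤ c ^ n := by
    rw [← rpow_def_of_pos hc0, ← rpow_natCast]
    exact rpow_le_rpow_of_exponent_ge hc0 hc1 (Nat.floor_le ht)
  rw [← mul_le_mul_iff_right₀ hc0, mul_inv_cancel_left₀ hc0.ne']
  calc c * (exp (log c * t) * ‖v‖) ≤ c * (c ^ n * ‖v‖) := by gcongr
    _ = c ^ (n + 1) * ‖v‖ := by ring
    _ ≤ ‖Φ (t + t₀) t₀ x v‖ := hpow

end IsCocycleOver

theorem stmt0_general {X V : Type*} [NormedAddCommGroup V] [NormedSpace ℝ V]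
    (φ : ℝ → ℝ → X → X) (Φ : ℝ → ℝ → X → V →L[ℝ] V)
    (hΦ2 : ∀ t s t₀ x, 0 ≤ t₀ → t₀ ≤ s → s ≤ t → Φ t t₀ x = (Φ t s (φ s t₀ x)).comp (Φ s t₀ x))
    (f : ℝ → ℝ) (hfpos : ∀ t, 0 ≤ t → 0 < f t)
    (hfdec : ∀ s t, 0 ≤ s → s ≤ t → f t ≤ f s)
    (hdecay : ∀ t, 0 ≤ t → ∀ t₀, 0 ≤ t₀ → ∀ x (v : V), f t * ‖v‖ ≤ ‖Φ (t + t₀) t₀ x v‖) :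
    ∃ N ω : ℝ, 1 < N ∧ 0 < ω ∧ ∀ t, 0 ≤ t → ∀ t₀, 0 ≤ t₀ → ∀ x (v : V),
      Real.exp (-ω * t) * ‖v‖ ≤ N * ‖Φ (t + t₀) t₀ x v‖ := by
  set c := min (f 1) (1 / 2)
  have hc0 : 0 < c := lt_min (hfpos 1 zero_le_one) one_half_pos
  have hc1 : c < 1 := (min_le_right _ _).trans_lt one_half_lt_one
  have hunit : ∀ s, 0 ≤ s → s ≤ 1 → ∀ t₀, 0 ≤ t₀ → ∀ x (v : V),
      c * ‖v‖ ≤ ‖Φ (s + t₀) t₀ x v‖ := fun s hs hs1 t₀ ht₀ x v =>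
    calc c * ‖v‖ ≤ f s * ‖v‖ := by gcongr; exact (min_le_left _ _).trans (hfdec s 1 hs hs1)
      _ ≤ ‖Φ (s + t₀) t₀ x v‖ := hdecay s hs t₀ ht₀ x v
  refine ⟨c⁻¹, -log c, one_lt_inv_iff₀.mpr ⟨hc0, hc1⟩, neg_pos.mpr (log_neg hc0 hc1),
    fun t ht t₀ ht₀ x v => ?_⟩
  rw [neg_neg]
  exact IsCocycleOver.exp_mul_norm_le hΦ2 hc0 hc1.le hunit ht ht₀ x v

theorem stmt0 {X V : Type*} [MetricSpace X] [NormedAddCommGroup V] [NormedSpace ℝ V]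
    (φ : ℝ → ℝ → X → X) (Φ : ℝ → ℝ → X → V →L[ℝ] V)
    (hφ1 : ∀ t, 0 ≤ t → ∀ x, φ t t x = x)
    (hφ2 : ∀ t s t₀ x, 0 ≤ t₀ → t₀ ≤ s → s ≤ t → φ t s (φ s t₀ x) = φ t t₀ x)
    (hΦ1 : ∀ t, 0 ≤ t → ∀ x, Φ t t x = ContinuousLinearMap.id ℝ V)
    (hΦ2 : ∀ t s t₀ x, 0 ≤ t₀ → t₀ ≤ s → s ≤ t → Φ t t₀ x = (Φ t s (φ s t₀ x)).comp (Φ s t₀ x))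
    (f : ℝ → ℝ) (hfpos : ∀ t, 0 ≤ t → 0 < f t)
    (hfdec : ∀ s t, 0 ≤ s → s ≤ t → f t ≤ f s)
    (hflim : Tendsto f atTop (nhds 0))
    (hdecay : ∀ t, 0 ≤ t → ∀ t₀, 0 ≤ t₀ → ∀ x (v : V), f t * ‖v‖ ≤ ‖Φ (t + t₀) t₀ x v‖) :
    ∃ N ω : ℝ, 1 < N ∧ 0 < ω ∧ ∀ t, 0 ≤ t → ∀ t₀, 0 ≤ t₀ → ∀ x (v : V),
      Real.exp (-ω * t) * ‖v‖ ≤ N * ‖Φ (t + t₀) t₀ x v‖ :=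
  stmt0_general φ Φ hΦ2 f hfpos hfdec hdecay
end

section
/- If an evolution cocycle ξ = (φ,Φ) has exponential decay (with function g ∈ F) and there exists M̃ : [0,∞) → (1,∞) such that M̃(t)‖Φ(t,t₀,x)v‖ ≥ ‖Φ(s,t₀,x)v‖ for all t ≥ s+1 > s ≥ t₀ ≥ 0 and all (x,v) ∈ Y, then ξ is unstable: there exists N : [0,∞) → (1,∞) with N(t)‖Φ(t,t₀,x)v‖ ≥ ‖v‖ for all t ≥ t₀ ≥ 0 and (x,v) ∈ Y. -/
open MeasureTheory Real Filter intervalIntegral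

theorem stmt11 {X V : Type*} [MetricSpace X] [NormedAddCommGroup V] [NormedSpace ℝ V]
    (φ : ℝ → ℝ → X → X) (Φ : ℝ → ℝ → X → V →L[ℝ] V)
    (hφ1 : ∀ t, 0 ≤ t → ∀ x, φ t t x = x)
    (hφ2 : ∀ t s t₀ x, 0 ≤ t₀ → t₀ ≤ s → s ≤ t → φ t s (φ s t₀ x) = φ t t₀ x)
    (hΦ1 : ∀ t, 0 ≤ t → ∀ x, Φ t t x = ContinuousLinearMap.id ℝ V)
    (hΦ2 : ∀ t s t₀ x, 0 ≤ t₀ → t₀ ≤ s → s ≤ t → Φ t t₀ x = (Φ t s (φ s t₀ x)).comp (Φ s t₀ x))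
    (g : ℝ → ℝ) (hgpos : ∀ t, 0 ≤ t → 0 < g t)
    (hgdec : ∀ s t, 0 ≤ s → s ≤ t → g t ≤ g s)
    (hglim : Tendsto g atTop (nhds 0))
    (hdecay : ∀ t, 0 ≤ t → ∀ t₀, 0 ≤ t₀ → ∀ x (v : V), g t * ‖v‖ ≤ ‖Φ (t + t₀) t₀ x v‖)
    (M : ℝ → ℝ) (hM : ∀ t, 0 ≤ t → 1 < M t)
    (hMprop : ∀ t s t₀, 0 ≤ t₀ → t₀ ≤ s → s + 1 ≤ t → ∀ x (v : V),
      ‖Φ s t₀ x v‖ ≤ M t * ‖Φ t t₀ x v‖) :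
    ∃ N : ℝ → ℝ, (∀ t, 0 ≤ t → 1 < N t) ∧
      ∀ t t₀, 0 ≤ t₀ → t₀ ≤ t → ∀ x (v : V), ‖v‖ ≤ N t * ‖Φ t t₀ x v‖ := by
  have hg1 : 0 < g 1 := hgpos 1 zero_le_one
  refine ⟨fun t => max (M t) (1 / g 1) + 1, ?_, ?_⟩
  · intro t ht
    have := hM t ht
    have : M t ≤ max (M t) (1 / g 1) := le_max_left _ _
    linarith [hM t ht]
  · intro t t₀ ht₀ htt₀ x v
    have hnorm : (0:ℝ) ≤ ‖Φ t t₀ x v‖ := norm_nonneg _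
    by_cases h : t₀ + 1 ≤ t
    · have h1 := hMprop t t₀ t₀ ht₀ le_rfl h x v
      rw [hΦ1 t₀ ht₀ x] at h1
      simp only [ContinuousLinearMap.id_apply] at h1
      have hMN : M t ≤ max (M t) (1 / g 1) + 1 := by
        have := le_max_left (M t) (1 / g 1); linarith
      calc ‖v‖ ≤ M t * ‖Φ t t₀ x v‖ := h1
        _ ≤ (max (M t) (1 / g 1) + 1) * ‖Φ t t₀ x v‖ :=
          mul_le_mul_of_nonneg_right hMN hnorm
    · push_neg at h
      have hst : 0 ≤ t - t₀ := by linarith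
      have h2 := hdecay (t - t₀) hst t₀ ht₀ x v
      rw [sub_add_cancel] at h2
      have hg2 : g 1 ≤ g (t - t₀) := hgdec (t - t₀) 1 hst (by linarith)
      have h3 : g 1 * ‖v‖ ≤ ‖Φ t t₀ x v‖ := by
        calc g 1 * ‖v‖ ≤ g (t - t₀) * ‖v‖ :=
              mul_le_mul_of_nonneg_right hg2 (norm_nonneg _)
          _ ≤ _ := h2
      have h4 : ‖v‖ ≤ (1 / g 1) * ‖Φ t t₀ x v‖ := by
        rw [div_mul_eq_mul_div, le_div_iff₀ hg1, mul_comm]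
        linarith
      have hN : (1 / g 1) ≤ max (M t) (1 / g 1) + 1 := by
        have := le_max_right (M t) (1 / g 1); linarith
      calc ‖v‖ ≤ (1 / g 1) * ‖Φ t t₀ x v‖ := h4
        _ ≤ _ := mul_le_mul_of_nonneg_right hN hnorm
end
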